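/- arXiv:0808.0294 — 2 statements merged into one kernel-verified Lean document; each statement's English description precedes it below -/
import Mathlib

section
/- Let S = ℤ^5 with Gram matrix diag(2,-2,-2,-2,-2) (the lattice A_1(-1)⊕A_1^4). Then the natural homomorphism O(S) → O(q_S) is surjective: every additive automorphism of the discriminant group A_S = S*/S preserving the discriminant quadratic form q_S is induced by an isometry P of S (P ∈ GL(5,ℤ) with PᵀGP = G). In fact O(q_S) is generated by the permutations of the last four coordinates together with the automorphism induced by the isometry s_0 ↦ 2s_0-s_1-s_2-s_3, s_1 ↦ s_0-s_1-s_3, s_2 ↦ s_4, s_3 ↦ s_0-s_2-s_3, s_4 ↦ s_0-s_1-s_2 (where s_0,…,s_4 is the standard basis). -/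
open Matrix

/-- Gram matrix of `S = A₁(-1) ⊕ A₁⁴`. -/
def gramS : Matrix (Fin 5) (Fin 5) ℤ := Matrix.diagonal ![2, -2, -2, -2, -2]

/-- `P` is an isometry of the lattice `(ℤⁿ, G)`, i.e. `P ∈ GL(n, ℤ)` with `Pᵀ G P = G`. -/
def IsIsometry {n : ℕ} (G P : Matrix (Fin n) (Fin n) ℤ) : Prop :=
  IsUnit P.det ∧ Pᵀ * G * P = G

/-- The `ℚ`-bilinear form of a lattice with Gram matrix `G`. -/
def bfQ {n : ℕ} (G : Matrix (Fin n) (Fin n) ℤ) (x y : Fin n → ℚ) : ℚ :=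
  x ⬝ᵥ (G.map ((↑) : ℤ → ℚ)).mulVec y

/-- `ℤⁿ ⊆ ℚⁿ` as an additive subgroup. -/
def intLattice (n : ℕ) : AddSubgroup (Fin n → ℚ) :=
  AddSubgroup.pi Set.univ fun _ => AddSubgroup.zmultiples (1 : ℚ)

/-- The dual lattice `L* = {x ∈ ℚⁿ : B(x, ℤⁿ) ⊆ ℤ} = {x : Gx ∈ ℤⁿ}`. -/
def dualLattice {n : ℕ} (G : Matrix (Fin n) (Fin n) ℤ) : AddSubgroup (Fin n → ℚ) :=
  AddSubgroup.comap ((G.map ((↑) : ℤ → ℚ)).mulVecLin.toAddMonoidHom) (intLattice n)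

/-- The discriminant group `A_L = L*/L`. -/
def discGroup {n : ℕ} (G : Matrix (Fin n) (Fin n) ℤ) : Type :=
  (dualLattice G) ⧸ ((intLattice n).addSubgroupOf (dualLattice G))

instance {n : ℕ} (G : Matrix (Fin n) (Fin n) ℤ) : AddCommGroup (discGroup G) :=
  QuotientAddGroup.Quotient.addCommGroup _

/-- The class of a dual vector in the discriminant group. -/
def discCls {n : ℕ} (G : Matrix (Fin n) (Fin n) ℤ) (x : dualLattice G) : discGroup G :=
  QuotientAddGroup.mk x

/-- `f` is the automorphism of the discriminant group induced by the matrix `P`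
(sending the class of `x ∈ L*` to the class of `Px`). -/
def InducedBy {n : ℕ} (G P : Matrix (Fin n) (Fin n) ℤ) (f : AddAut (discGroup G)) : Prop :=
  ∀ x y : dualLattice G,
    (y : Fin n → ℚ) = (P.map ((↑) : ℤ → ℚ)).mulVec x → f (discCls G x) = discCls G y

/-- `f` preserves the discriminant quadratic form `q_S` (expressed on representatives). -/
def PreservesQ {n : ℕ} (G : Matrix (Fin n) (Fin n) ℤ) (f : AddAut (discGroup G)) : Prop :=
  ∀ x y : dualLattice G, f (discCls G x) = discCls G y →
    bfQ G y y - bfQ G x x ∈ AddSubgroup.zmultiples (2 : ℚ)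

/-- The matrix of the isometry `s₀ ↦ 2s₀-s₁-s₂-s₃, s₁ ↦ s₀-s₁-s₃, s₂ ↦ s₄,
s₃ ↦ s₀-s₂-s₃, s₄ ↦ s₀-s₁-s₂` of `S` (columns are the images of the basis vectors). -/
def P₀ : Matrix (Fin 5) (Fin 5) ℤ :=
  !![2, 1, 0, 1, 1;
    -1, -1, 0, 0, -1;
    -1, 0, 0, -1, -1;
    -1, -1, 0, -1, 0;
     0, 0, 1, 0, 0]

/-- The generating set: automorphisms of `A_S` induced by the permutations of the last
four coordinates, together with the automorphism induced by the isometry `P₀`. -/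
def genSet : Set (AddAut (discGroup gramS)) :=
  {f | ∃ σ : Equiv.Perm (Fin 5), σ 0 = 0 ∧
    ∀ x y : dualLattice gramS,
      ((y : Fin 5 → ℚ) = fun i => (x : Fin 5 → ℚ) (σ i)) → f (discCls gramS x) = discCls gramS y} ∪
  {f | InducedBy gramS P₀ f}

/-!
Halving identifies `A_S = (½ℤ⁵)/ℤ⁵` with `(ℤ/2)⁵`, and `4 q_S` with
`v ↦ v₀² - v₁² - ⋯ - v₄² mod 8`; an integer matrix acts on `A_S` through its reduction mod 2.
An isometry `g` of this quadratic space fixes the characteristic vector `(1, …, 1)`, so `g e₀`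
is one of the other vectors of norm `1/2`, which form the orbit `{P₀ᵏ e₀ | k < 5}`. After composing
with a power of `P₀` we may assume `g e₀ = e₀`; then `g` permutes `e₁, …, e₄`, the only vectors
`e` of norm `-1/2` with `q(e₀ + e) = 0`. Hence `O(q_S) = {P₀ᵏ σ}` with `σ` permuting the last
four coordinates, and each `P₀ᵏ σ` is an isometry of `S`.
-/

lemma mem_intLattice_iff {n : ℕ} (v : Fin n → ℚ) :
    v ∈ intLattice n ↔ ∀ i, ∃ m : ℤ, (m : ℚ) = v i := by
  simp only [intLattice, AddSubgroup.mem_pi, Set.mem_univ, forall_const,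
    AddSubgroup.mem_zmultiples_iff, zsmul_eq_mul, mul_one]

lemma mem_dualLattice_diagonal_iff {n : ℕ} (d : Fin n → ℤ) (x : Fin n → ℚ) :
    x ∈ dualLattice (diagonal d) ↔ ∀ i, ∃ m : ℤ, (m : ℚ) = d i * x i := by
  simp only [dualLattice, AddSubgroup.mem_comap, LinearMap.toAddMonoidHom_coe, mulVecLin_apply,
    mem_intLattice_iff, diagonal_map Int.cast_zero, mulVec_diagonal]

lemma bfQ_diagonal_self {n : ℕ} (d : Fin n → ℤ) (x : Fin n → ℚ) :
    bfQ (diagonal d) x x = ∑ i, d i * x i ^ 2 := by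
  simp only [bfQ, diagonal_map Int.cast_zero, mulVec_diagonal, dotProduct]
  exact Finset.sum_congr rfl fun i _ => by ring

lemma discCls_surjective {n : ℕ} (G : Matrix (Fin n) (Fin n) ℤ) :
    Function.Surjective (discCls G) :=
  QuotientAddGroup.mk_surjective

def isometrySubmonoid {n : ℕ} (G : Matrix (Fin n) (Fin n) ℤ) :
    Submonoid (Matrix (Fin n) (Fin n) ℤ) where
  carrier := {P | IsIsometry G P}
  one_mem' := ⟨by simp, by simp⟩
  mul_mem' {P Q} hP hQ := by
    refine ⟨by rw [det_mul]; exact hP.1.mul hQ.1, ?_⟩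
    calc (P * Q)ᵀ * G * (P * Q) = Qᵀ * (Pᵀ * G * P) * Q := by
          simp only [transpose_mul, Matrix.mul_assoc]
      _ = G := by rw [hP.2, hQ.2]

lemma isIsometry_of_transpose_mul_mul_eq {n : ℕ} {G P : Matrix (Fin n) (Fin n) ℤ}
    (hG : G.det ≠ 0) (h : Pᵀ * G * P = G) : IsIsometry G P := by
  refine ⟨IsUnit.of_mul_eq_one P.det (mul_right_cancel₀ hG ?_), h⟩
  calc P.det * P.det * G.det = (Pᵀ * G * P).det := by rw [det_mul, det_mul, det_transpose]; ring
    _ = 1 * G.det := by rw [h, one_mul]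

lemma isIsometry_permMatrix {n : ℕ} {d : Fin n → ℤ} (σ : Equiv.Perm (Fin n))
    (hσ : ∀ i, d (σ i) = d i) : IsIsometry (diagonal d) (σ.permMatrix ℤ) := by
  refine ⟨by simp [det_permutation], ?_⟩
  rw [transpose_permMatrix, PEquiv.toMatrix_toPEquiv_mul, PEquiv.mul_toMatrix_toPEquiv,
    submatrix_submatrix, Function.id_comp, Function.comp_id, Equiv.Perm.inv_def,
    submatrix_diagonal_equiv]
  congr 1
  funext i
  simpa using (hσ (σ.symm i)).symm

lemma inducedBy_permMatrix_iff {n : ℕ} (G : Matrix (Fin n) (Fin n) ℤ) (σ : Equiv.Perm (Fin n))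
    (f : AddAut (discGroup G)) :
    InducedBy G (σ.permMatrix ℤ) f ↔ ∀ x y : dualLattice G,
      ((y : Fin n → ℚ) = fun i => (x : Fin n → ℚ) (σ i)) → f (discCls G x) = discCls G y := by
  have h : (σ.permMatrix ℤ).map ((↑) : ℤ → ℚ) = σ.permMatrix ℚ :=
    PEquiv.map_toMatrix (Int.castRingHom ℚ) _
  simp only [InducedBy, h, permMatrix_mulVec]
  rfl

def preservingAddSubgroup {M X : Type*} [Add M] (q : M → X) : AddSubgroup (AddAut M) where
  carrier := {g | ∀ v, q (g v) = q v}
  zero_mem' _ := rfl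
  add_mem' hg hh v := (hg _).trans (hh v)
  neg_mem' {g} hg v := by simpa using (hg (g.symm v)).symm

lemma mem_closure_preimage_addEquiv_iff {G H : Type*} [AddGroup G] [AddGroup H] (e : G ≃+ H)
    (s : Set H) (x : G) : x ∈ AddSubgroup.closure (e ⁻¹' s) ↔ e x ∈ AddSubgroup.closure s := by
  have h : e ⁻¹' s = e.symm.toAddMonoidHom '' s := (e.symm.toEquiv.image_eq_preimage_symm s).symm
  rw [h, ← AddMonoidHom.map_closure, AddSubgroup.mem_map_equiv, AddEquiv.symm_symm]

section VectorAutomorphisms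

variable {n : ℕ} {R : Type*}

def mulVecAddAut [CommRing R] (M : (Matrix (Fin n) (Fin n) R)ˣ) : AddAut (Fin n → R) :=
  (GeneralLinearGroup.toLin M).toLinearEquiv.toAddEquiv

lemma nsmul_mulVecAddAut_apply [CommRing R] (M : (Matrix (Fin n) (Fin n) R)ˣ) (k : ℕ)
    (v : Fin n → R) : (k • mulVecAddAut M) v = (M : Matrix (Fin n) (Fin n) R) ^ k *ᵥ v := by
  induction k generalizing v with
  | zero => simp
  | succ k ih =>
    rw [succ_nsmul, AddAut.add_apply, ih, pow_succ, ← mulVec_mulVec]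
    rfl

def permAddAut [AddCommMonoid R] (σ : Equiv.Perm (Fin n)) : AddAut (Fin n → R) :=
  (LinearEquiv.funCongrLeft ℕ R σ).toAddEquiv

lemma permAddAut_apply [AddCommMonoid R] (σ : Equiv.Perm (Fin n)) (v : Fin n → R) :
    permAddAut σ v = v ∘ σ := rfl

lemma single_one_left_injective [Zero R] [One R] [NeZero (1 : R)] :
    Function.Injective fun i : Fin n => (Pi.single i 1 : Fin n → R) := fun i j h => by
  simpa [Pi.single_apply] using congrFun h i

end VectorAutomorphisms

/-- For `x ∈ L*` with `2x ≡ v (mod 2)`, where `L` has Gram matrix `diagonal d` with `d i = ±2`,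
`discQ d v = 4 B(x, x) mod 8`; this is `4 q_L`. -/
def discQ {n : ℕ} (d : Fin n → ℤ) (v : Fin n → ZMod 2) : ZMod 8 :=
  ∑ i, (d i : ZMod 8) * ((v i).val : ZMod 8) ^ 2

section DiagonalTwo

variable {n : ℕ} {d : Fin n → ℤ}

lemma mem_dualLattice_diagonal_two_iff (hd : ∀ i, d i = 2 ∨ d i = -2) (x : Fin n → ℚ) :
    x ∈ dualLattice (diagonal d) ↔ ∀ i, ∃ m : ℤ, (m : ℚ) = 2 * x i := by
  rw [mem_dualLattice_diagonal_iff]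
  refine forall_congr' fun i => ?_
  rcases hd i with h | h <;> rw [h]
  · rfl
  · constructor <;> rintro ⟨m, hm⟩ <;> exact ⟨-m, by push_cast at hm ⊢; linarith⟩

lemma exists_intCast_eq_two_mul (hd : ∀ i, d i = 2 ∨ d i = -2) (x : dualLattice (diagonal d)) :
    ∃ m : Fin n → ℤ, ∀ i, (m i : ℚ) = 2 * (x : Fin n → ℚ) i := by
  choose m hm using (mem_dualLattice_diagonal_two_iff hd x).mp x.2
  exact ⟨m, hm⟩

def doubleModTwo (hd : ∀ i, d i = 2 ∨ d i = -2) : dualLattice (diagonal d) →+ (Fin n → ZMod 2) where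
  toFun x i := (⌊2 * (x : Fin n → ℚ) i⌋ : ZMod 2)
  map_zero' := by ext; simp
  map_add' x y := by
    obtain ⟨m, hm⟩ := exists_intCast_eq_two_mul hd x
    obtain ⟨m', hm'⟩ := exists_intCast_eq_two_mul hd y
    ext i
    simp only [AddSubgroup.coe_add, Pi.add_apply, mul_add, ← hm, ← hm', ← Int.cast_add,
      Int.floor_intCast]

lemma doubleModTwo_apply (hd : ∀ i, d i = 2 ∨ d i = -2) (x : dualLattice (diagonal d))
    (m : Fin n → ℤ) (hm : ∀ i, (m i : ℚ) = 2 * (x : Fin n → ℚ) i) :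
    doubleModTwo hd x = fun i => (m i : ZMod 2) := by
  ext i
  simp only [doubleModTwo, AddMonoidHom.coe_mk, ZeroHom.coe_mk, ← hm, Int.floor_intCast]

lemma ker_doubleModTwo (hd : ∀ i, d i = 2 ∨ d i = -2) :
    (doubleModTwo hd).ker = (intLattice n).addSubgroupOf (dualLattice (diagonal d)) := by
  ext x
  obtain ⟨m, hm⟩ := exists_intCast_eq_two_mul hd x
  simp only [AddMonoidHom.mem_ker, doubleModTwo_apply hd x m hm, AddSubgroup.mem_addSubgroupOf,
    mem_intLattice_iff, funext_iff, Pi.zero_apply, ZMod.intCast_zmod_eq_zero_iff_dvd]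
  refine forall_congr' fun i => ⟨fun ⟨k, hk⟩ => ⟨k, ?_⟩, fun ⟨k, hk⟩ => ⟨k, ?_⟩⟩
  · have := hm i
    rw [hk] at this
    push_cast at this
    linarith
  · have := hm i
    rw [← hk] at this
    exact_mod_cast this

lemma doubleModTwo_surjective (hd : ∀ i, d i = 2 ∨ d i = -2) :
    Function.Surjective (doubleModTwo hd) := by
  intro v
  have hx : (fun i => ((v i).val : ℚ) / 2) ∈ dualLattice (diagonal d) :=
    (mem_dualLattice_diagonal_two_iff hd _).mpr fun i => ⟨(v i).val, by push_cast; ring⟩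
  refine ⟨⟨_, hx⟩, ?_⟩
  rw [doubleModTwo_apply hd _ (fun i => (v i).val) fun i => by push_cast; ring]
  ext i
  simp

noncomputable def discEquiv (hd : ∀ i, d i = 2 ∨ d i = -2) :
    discGroup (diagonal d) ≃+ (Fin n → ZMod 2) :=
  (QuotientAddGroup.quotientAddEquivOfEq (ker_doubleModTwo hd).symm).trans
    (QuotientAddGroup.quotientKerEquivOfSurjective _ (doubleModTwo_surjective hd))

lemma discEquiv_discCls (hd : ∀ i, d i = 2 ∨ d i = -2) (x : dualLattice (diagonal d)) :
    discEquiv hd (discCls _ x) = doubleModTwo hd x := rfl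

lemma two_mul_val_intCast_sq (m : ℤ) :
    (2 : ZMod 8) * ((m : ZMod 2).val : ZMod 8) ^ 2 = 2 * (m : ZMod 8) ^ 2 := by
  rw [← Int.cast_natCast, ZMod.val_intCast]
  have h : ((2 * (m % 2) ^ 2 : ℤ) : ZMod 8) = ((2 * m ^ 2 : ℤ) : ZMod 8) := by
    rw [ZMod.intCast_eq_intCast_iff_dvd_sub]
    exact ⟨m % 2 * (m / 2) + (m / 2) ^ 2, by
      linear_combination (-2 * (m + m % 2 + 2 * (m / 2))) * Int.emod_add_mul_ediv m 2⟩
  exact_mod_cast h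

lemma bfQ_diagonal_self_eq (x : Fin n → ℚ) (m : Fin n → ℤ) (hm : ∀ i, (m i : ℚ) = 2 * x i) :
    bfQ (diagonal d) x x = ((∑ i, d i * m i ^ 2 : ℤ) : ℚ) / 4 := by
  rw [bfQ_diagonal_self]
  push_cast
  rw [Finset.sum_div]
  refine Finset.sum_congr rfl fun i _ => ?_
  rw [hm i]
  ring

lemma discQ_doubleModTwo (hd : ∀ i, d i = 2 ∨ d i = -2) (x : dualLattice (diagonal d))
    (m : Fin n → ℤ) (hm : ∀ i, (m i : ℚ) = 2 * (x : Fin n → ℚ) i) :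
    discQ d (doubleModTwo hd x) = ((∑ i, d i * m i ^ 2 : ℤ) : ZMod 8) := by
  rw [doubleModTwo_apply hd x m hm, discQ]
  push_cast
  refine Finset.sum_congr rfl fun i _ => ?_
  rcases hd i with h | h <;> rw [h] <;> push_cast
  · exact two_mul_val_intCast_sq (m i)
  · rw [neg_mul, neg_mul, two_mul_val_intCast_sq]

lemma intCast_div_four_sub_mem_zmultiples_two_iff (a b : ℤ) :
    (b : ℚ) / 4 - a / 4 ∈ AddSubgroup.zmultiples (2 : ℚ) ↔ (b : ZMod 8) = a := by
  rw [AddSubgroup.mem_zmultiples_iff, ZMod.intCast_eq_intCast_iff_dvd_sub]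
  constructor
  · rintro ⟨k, hk⟩
    refine ⟨-k, ?_⟩
    rw [zsmul_eq_mul] at hk
    have : ((a - b : ℤ) : ℚ) = ((8 * -k : ℤ) : ℚ) := by push_cast; linarith
    exact_mod_cast this
  · rintro ⟨k, hk⟩
    refine ⟨-k, ?_⟩
    have : ((a - b : ℤ) : ℚ) = ((8 * k : ℤ) : ℚ) := by rw [hk]; rfl
    push_cast at this
    rw [zsmul_eq_mul]
    push_cast
    linarith

lemma bfQ_sub_mem_zmultiples_two_iff (hd : ∀ i, d i = 2 ∨ d i = -2)
    (x y : dualLattice (diagonal d)) :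
    bfQ (diagonal d) y y - bfQ (diagonal d) x x ∈ AddSubgroup.zmultiples (2 : ℚ) ↔
      discQ d (doubleModTwo hd y) = discQ d (doubleModTwo hd x) := by
  obtain ⟨m, hm⟩ := exists_intCast_eq_two_mul hd x
  obtain ⟨m', hm'⟩ := exists_intCast_eq_two_mul hd y
  rw [bfQ_diagonal_self_eq _ m hm, bfQ_diagonal_self_eq _ m' hm', discQ_doubleModTwo hd x m hm,
    discQ_doubleModTwo hd y m' hm', intCast_div_four_sub_mem_zmultiples_two_iff]

lemma preservesQ_diagonal_iff (hd : ∀ i, d i = 2 ∨ d i = -2)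
    (f : AddAut (discGroup (diagonal d))) :
    PreservesQ (diagonal d) f ↔
      AddAut.congr (discEquiv hd) f ∈ preservingAddSubgroup (discQ d) := by
  refine ⟨fun h v => ?_, fun h x y hxy => ?_⟩
  · obtain ⟨x, hx⟩ := discCls_surjective _ ((discEquiv hd).symm v)
    obtain ⟨y, hy⟩ := discCls_surjective _ (f (discCls _ x))
    have := (bfQ_sub_mem_zmultiples_two_iff hd x y).mp (h x y hy.symm)
    rwa [AddAut.congr_apply, AddEquiv.trans_apply, AddEquiv.trans_apply, ← hx, ← hy,
      discEquiv_discCls, ← AddEquiv.apply_symm_apply (discEquiv hd) v, ← hx, discEquiv_discCls]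
  · have := h (discEquiv hd (discCls _ x))
    simp only [AddAut.congr_apply, AddEquiv.trans_apply, AddEquiv.symm_apply_apply, hxy] at this
    exact (bfQ_sub_mem_zmultiples_two_iff hd x y).mpr this

lemma discQ_comp_perm (σ : Equiv.Perm (Fin n)) (hσ : ∀ i, d (σ i) = d i) (v : Fin n → ZMod 2) :
    discQ d (v ∘ σ) = discQ d v := by
  rw [discQ, discQ, ← Equiv.sum_comp σ (fun i => (d i : ZMod 8) * ((v i).val : ZMod 8) ^ 2)]
  simp only [Function.comp_apply, hσ]

lemma intCast_mulVec_eq_two_mul (P : Matrix (Fin n) (Fin n) ℤ) {x : Fin n → ℚ} {m : Fin n → ℤ}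
    (hm : ∀ i, (m i : ℚ) = 2 * x i) (i : Fin n) :
    ((P *ᵥ m) i : ℚ) = 2 * (P.map (↑) *ᵥ x) i := by
  have h := RingHom.map_mulVec (Int.castRingHom ℚ) P m i
  simp only [Int.coe_castRingHom] at h
  rw [h, show ((↑) ∘ m : Fin n → ℚ) = (2 : ℚ) • x from funext hm, mulVec_smul, Pi.smul_apply,
    smul_eq_mul]

lemma mulVec_mem_dualLattice (hd : ∀ i, d i = 2 ∨ d i = -2) (P : Matrix (Fin n) (Fin n) ℤ)
    (x : dualLattice (diagonal d)) : P.map (↑) *ᵥ (x : Fin n → ℚ) ∈ dualLattice (diagonal d) := by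
  obtain ⟨m, hm⟩ := exists_intCast_eq_two_mul hd x
  exact (mem_dualLattice_diagonal_two_iff hd _).mpr fun i =>
    ⟨(P *ᵥ m) i, intCast_mulVec_eq_two_mul P hm i⟩

lemma doubleModTwo_of_eq_mulVec (hd : ∀ i, d i = 2 ∨ d i = -2) (P : Matrix (Fin n) (Fin n) ℤ)
    (x y : dualLattice (diagonal d)) (h : (y : Fin n → ℚ) = P.map (↑) *ᵥ (x : Fin n → ℚ)) :
    doubleModTwo hd y = P.map (Int.cast : ℤ → ZMod 2) *ᵥ doubleModTwo hd x := by
  obtain ⟨m, hm⟩ := exists_intCast_eq_two_mul hd x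
  rw [doubleModTwo_apply hd x m hm,
    doubleModTwo_apply hd y (P *ᵥ m) fun i => by rw [h]; exact intCast_mulVec_eq_two_mul P hm i]
  ext i
  have h := RingHom.map_mulVec (Int.castRingHom (ZMod 2)) P m i
  simp only [Int.coe_castRingHom] at h
  exact h

lemma inducedBy_diagonal_iff (hd : ∀ i, d i = 2 ∨ d i = -2) (P : Matrix (Fin n) (Fin n) ℤ)
    (f : AddAut (discGroup (diagonal d))) :
    InducedBy (diagonal d) P f ↔
      ∀ v, AddAut.congr (discEquiv hd) f v = P.map (Int.cast : ℤ → ZMod 2) *ᵥ v := by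
  refine ⟨fun h v => ?_, fun h x y hxy => (discEquiv hd).injective ?_⟩
  · obtain ⟨x, hx⟩ := discCls_surjective _ ((discEquiv hd).symm v)
    let y : dualLattice (diagonal d) := ⟨_, mulVec_mem_dualLattice hd P x⟩
    rw [AddAut.congr_apply, AddEquiv.trans_apply, AddEquiv.trans_apply, ← hx, h x y rfl,
      discEquiv_discCls, doubleModTwo_of_eq_mulVec hd P x y rfl, ← discEquiv_discCls, hx,
      AddEquiv.apply_symm_apply]
  · have := h (discEquiv hd (discCls _ x))
    rw [AddAut.congr_apply, AddEquiv.trans_apply, AddEquiv.trans_apply,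
      AddEquiv.symm_apply_apply] at this
    rw [this, discEquiv_discCls, discEquiv_discCls, doubleModTwo_of_eq_mulVec hd P x y hxy]

lemma inducedBy_diagonal_permMatrix_iff (hd : ∀ i, d i = 2 ∨ d i = -2)
    (σ : Equiv.Perm (Fin n)) (f : AddAut (discGroup (diagonal d))) :
    InducedBy (diagonal d) (σ.permMatrix ℤ) f ↔ AddAut.congr (discEquiv hd) f = permAddAut σ := by
  have h : (σ.permMatrix ℤ).map (Int.cast : ℤ → ZMod 2) = σ.permMatrix (ZMod 2) :=
    PEquiv.map_toMatrix (Int.castRingHom (ZMod 2)) _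
  rw [inducedBy_diagonal_iff hd, h, DFunLike.ext_iff]
  simp only [permMatrix_mulVec, permAddAut_apply]

end DiagonalTwo

def diagS : Fin 5 → ℤ := ![2, -2, -2, -2, -2]

lemma diagS_eq_two_or_neg_two : ∀ i, diagS i = 2 ∨ diagS i = -2 := by decide

lemma diagS_perm {σ : Equiv.Perm (Fin 5)} (hσ : σ 0 = 0) (i : Fin 5) :
    diagS (σ i) = diagS i := by
  have hneg : ∀ j : Fin 5, j ≠ 0 → diagS j = -2 := by decide
  rcases eq_or_ne i 0 with rfl | hi
  · rw [hσ]
  · rw [hneg i hi, hneg (σ i) fun h => hi (σ.injective (h.trans hσ.symm))]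

noncomputable def discEquivS : discGroup gramS ≃+ (Fin 5 → ZMod 2) :=
  discEquiv diagS_eq_two_or_neg_two

lemma preservesQ_gramS_iff (f : AddAut (discGroup gramS)) :
    PreservesQ gramS f ↔ AddAut.congr discEquivS f ∈ preservingAddSubgroup (discQ diagS) :=
  preservesQ_diagonal_iff diagS_eq_two_or_neg_two f

lemma inducedBy_gramS_iff (P : Matrix (Fin 5) (Fin 5) ℤ) (f : AddAut (discGroup gramS)) :
    InducedBy gramS P f ↔
      ∀ v, AddAut.congr discEquivS f v = P.map (Int.cast : ℤ → ZMod 2) *ᵥ v :=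
  inducedBy_diagonal_iff diagS_eq_two_or_neg_two P f

lemma isIsometry_P₀ : IsIsometry gramS P₀ :=
  isIsometry_of_transpose_mul_mul_eq (by simp [gramS, det_diagonal, Fin.prod_univ_five])
    (by decide)

def P₀mod2 : Matrix (Fin 5) (Fin 5) (ZMod 2) := P₀.map (↑)

lemma P₀mod2_pow_five : P₀mod2 ^ 5 = 1 := by decide

lemma discQ_P₀mod2_mulVec : ∀ v, discQ diagS (P₀mod2 *ᵥ v) = discQ diagS v := by decide

lemma discQ_single : discQ diagS (Pi.single 0 1) = 2 ∧ ∀ i ≠ 0,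
    discQ diagS (Pi.single i 1) = 6 ∧ discQ diagS (Pi.single 0 1 + Pi.single i 1) = 0 := by
  decide

/-- The vectors `c` with `discQ c = 2` are the five `P₀ᵏ e₀` and the characteristic vector
`(1, …, 1)`; the condition on `e` excludes the latter. -/
lemma exists_eq_P₀mod2_pow_mulVec_single_zero : ∀ c e : Fin 5 → ZMod 2,
    discQ diagS c = 2 → discQ diagS e = 6 → discQ diagS (c + e) = 0 →
      ∃ k : Fin 5, c = P₀mod2 ^ (k : ℕ) *ᵥ Pi.single 0 1 := by
  decide

lemma exists_eq_single_of_discQ : ∀ e : Fin 5 → ZMod 2,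
    discQ diagS e = 6 → discQ diagS (Pi.single 0 1 + e) = 0 → ∃ j ≠ 0, e = Pi.single j 1 := by
  decide

lemma exists_eq_permAddAut_of_apply_single_zero (h : AddAut (Fin 5 → ZMod 2))
    (hq : h ∈ preservingAddSubgroup (discQ diagS)) (h0 : h (Pi.single 0 1) = Pi.single 0 1) :
    ∃ σ : Equiv.Perm (Fin 5), σ 0 = 0 ∧ h = permAddAut σ := by
  have himage : ∀ i, ∃ j, (i = 0 → j = 0) ∧ h (Pi.single i 1) = Pi.single j 1 := by
    intro i
    rcases eq_or_ne i 0 with rfl | hi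
    · exact ⟨0, fun _ => rfl, h0⟩
    · obtain ⟨hi6, hi0⟩ := discQ_single.2 i hi
      obtain ⟨j, -, hj⟩ := exists_eq_single_of_discQ _ ((hq _).trans hi6)
        (by rw [← h0, ← map_add, hq, hi0])
      exact ⟨j, fun h => absurd h hi, hj⟩
  choose τ hτ0 hτ using himage
  have hτinj : Function.Injective τ := fun i j hij =>
    single_one_left_injective (h.injective ((hτ i).trans (hij ▸ (hτ j).symm)))
  let τ' := Equiv.ofBijective τ (Finite.injective_iff_bijective.mp hτinj)
  refine ⟨τ'.symm, τ'.symm_apply_eq.mpr (hτ0 0 rfl).symm,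
    AddEquiv.toAddMonoidHom_injective (AddMonoidHom.functions_ext _ _ _ fun i x => ?_)⟩
  fin_cases x
  · change h (Pi.single i 0) = permAddAut τ'.symm (Pi.single i 0)
    rw [Pi.single_zero, map_zero, map_zero]
  · change h (Pi.single i 1) = Pi.single i 1 ∘ τ'.symm
    rw [hτ, Pi.single_comp_equiv, Equiv.symm_symm]
    rfl

def P₀mod2Aut : AddAut (Fin 5 → ZMod 2) :=
  mulVecAddAut (Units.ofPowEqOne P₀mod2 5 P₀mod2_pow_five (by norm_num))

lemma nsmul_P₀mod2Aut_apply (k : ℕ) (v : Fin 5 → ZMod 2) :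
    (k • P₀mod2Aut) v = P₀mod2 ^ k *ᵥ v :=
  nsmul_mulVecAddAut_apply _ k v

lemma P₀mod2Aut_apply (v : Fin 5 → ZMod 2) : P₀mod2Aut v = P₀mod2 *ᵥ v := by
  simpa using nsmul_P₀mod2Aut_apply 1 v

lemma exists_eq_nsmul_P₀mod2Aut_add_permAddAut (g : AddAut (Fin 5 → ZMod 2))
    (hg : g ∈ preservingAddSubgroup (discQ diagS)) :
    ∃ k : ℕ, ∃ σ : Equiv.Perm (Fin 5), σ 0 = 0 ∧ g = k • P₀mod2Aut + permAddAut σ := by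
  obtain ⟨k, hk⟩ := exists_eq_P₀mod2_pow_mulVec_single_zero (g (Pi.single 0 1))
    (g (Pi.single 1 1)) ((hg _).trans discQ_single.1)
    ((hg _).trans (discQ_single.2 1 (by decide)).1)
    (by rw [← map_add, hg]; exact (discQ_single.2 1 (by decide)).2)
  have hP₀ : P₀mod2Aut ∈ preservingAddSubgroup (discQ diagS) := fun v => by
    rw [P₀mod2Aut_apply, discQ_P₀mod2_mulVec]
  obtain ⟨σ, hσ, hσeq⟩ := exists_eq_permAddAut_of_apply_single_zero
    (-((k : ℕ) • P₀mod2Aut) + g) (add_mem (neg_mem (nsmul_mem hP₀ (k : ℕ))) hg) (by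
      rw [AddAut.add_apply, hk, ← nsmul_P₀mod2Aut_apply, AddAut.neg_apply,
        AddEquiv.symm_apply_apply])
  exact ⟨(k : ℕ), σ, hσ, by rw [← hσeq, add_neg_cancel_left]⟩

def vecGenerators : Set (AddAut (Fin 5 → ZMod 2)) :=
  {g | ∃ σ : Equiv.Perm (Fin 5), σ 0 = 0 ∧ g = permAddAut σ} ∪ {P₀mod2Aut}

theorem closure_vecGenerators :
    AddSubgroup.closure vecGenerators = preservingAddSubgroup (discQ diagS) := by
  refine le_antisymm ((AddSubgroup.closure_le _).mpr ?_) fun g hg => ?_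
  · rintro g (⟨σ, hσ, rfl⟩ | rfl) v
    · exact discQ_comp_perm σ (diagS_perm hσ) v
    · rw [P₀mod2Aut_apply, discQ_P₀mod2_mulVec]
  · obtain ⟨k, σ, hσ, rfl⟩ := exists_eq_nsmul_P₀mod2Aut_add_permAddAut g hg
    exact add_mem (nsmul_mem (AddSubgroup.subset_closure
      (Set.mem_union_right _ (Set.mem_singleton P₀mod2Aut))) k)
      (AddSubgroup.subset_closure (Set.mem_union_left _ ⟨σ, hσ, rfl⟩))

lemma genSet_eq_preimage : genSet = AddAut.congr discEquivS ⁻¹' vecGenerators := by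
  ext f
  refine or_congr (exists_congr fun σ => and_congr_right fun _ => ?_) ?_
  · rw [← inducedBy_permMatrix_iff]
    exact inducedBy_diagonal_permMatrix_iff diagS_eq_two_or_neg_two σ f
  · refine (inducedBy_gramS_iff P₀ f).trans ?_
    rw [Set.mem_singleton_iff, DFunLike.ext_iff]
    simp only [P₀mod2Aut_apply]
    rfl

lemma map_P₀_pow_mul_permMatrix (k : ℕ) (σ : Equiv.Perm (Fin 5)) :
    (P₀ ^ k * σ.permMatrix ℤ).map (Int.cast : ℤ → ZMod 2) = P₀mod2 ^ k * σ.permMatrix (ZMod 2) := by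
  have h := map_mul (Int.castRingHom (ZMod 2)).mapMatrix (P₀ ^ k) (σ.permMatrix ℤ)
  rw [map_pow, RingHom.mapMatrix_apply, RingHom.mapMatrix_apply, RingHom.mapMatrix_apply,
    PEquiv.map_toMatrix] at h
  exact h

/-- The natural map `O(S) → O(q_S)` is surjective: every additive automorphism of
`A_S = S*/S` preserving the discriminant form `q_S` is induced by an isometry of
`S = A₁(-1) ⊕ A₁⁴`.  In fact `O(q_S)` is generated by the permutations of the last four
coordinates together with the automorphism induced by the isometry `P₀`. -/
theorem OS_to_OqS_surjective_and_generators :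
    (∀ f : AddAut (discGroup gramS), PreservesQ gramS f →
      ∃ P : Matrix (Fin 5) (Fin 5) ℤ, IsIsometry gramS P ∧ InducedBy gramS P f) ∧
    (∀ f : AddAut (discGroup gramS), PreservesQ gramS f ↔ f ∈ AddSubgroup.closure genSet) := by
  refine ⟨fun f hf => ?_, fun f => ?_⟩
  · obtain ⟨k, σ, hσ, hfk⟩ :=
      exists_eq_nsmul_P₀mod2Aut_add_permAddAut _ ((preservesQ_gramS_iff f).mp hf)
    refine ⟨P₀ ^ k * σ.permMatrix ℤ, (isometrySubmonoid gramS).mul_mem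
      (pow_mem isIsometry_P₀ k) (isIsometry_permMatrix σ (diagS_perm hσ)),
      (inducedBy_gramS_iff _ f).mpr fun v => ?_⟩
    rw [hfk, AddAut.add_apply, permAddAut_apply, nsmul_P₀mod2Aut_apply,
      map_P₀_pow_mul_permMatrix, ← mulVec_mulVec, permMatrix_mulVec]
  · rw [preservesQ_gramS_iff, ← closure_vecGenerators, genSet_eq_preimage,
      mem_closure_preimage_addEquiv_iff]
end

section
/- The lattice T = U⊕U⊕E_8⊕A_1^5 is isometric to U⊕U⊕E_7⊕D_4⊕A_1⊕A_1 and also isometric to U⊕U⊕D_6⊕D_6⊕A_1: there exist P, Q ∈ GL(17,ℤ) carrying the block-diagonal Gram matrix of U⊕U⊕E_8⊕A_1^5 to those of U⊕U⊕E_7⊕D_4⊕A_1^2 and of U⊕U⊕D_6^2⊕A_1 respectively. -/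
open Matrix

/-- Gram matrix of the hyperbolic plane `U`. -/
def gramU : Matrix (Fin 2) (Fin 2) ℤ := !![0, 1; 1, 0]

/-- Gram matrix of `U(2)`. -/
def gramU2 : Matrix (Fin 2) (Fin 2) ℤ := !![0, 2; 2, 0]

/-- Gram matrix of `A₁`. -/
def gramA1 : Matrix (Fin 1) (Fin 1) ℤ := !![-2]

/-- Gram matrix of the negative definite root lattice whose Dynkin diagram is a chain
on nodes `0, …, n-2` together with an extra node `n-1` attached to node `k`
(`k = 2` gives the `E`-series, `k = 1` the `D`-series). -/
def gramRoot (n k : ℕ) : Matrix (Fin n) (Fin n) ℤ :=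
  Matrix.of fun i j =>
    if i = j then -2
    else if (((i : ℕ) + 1 = j ∨ (j : ℕ) + 1 = i) ∧ (i : ℕ) + 1 ≠ n ∧ (j : ℕ) + 1 ≠ n) ∨
        ((i : ℕ) + 1 = n ∧ (j : ℕ) = k) ∨ ((j : ℕ) + 1 = n ∧ (i : ℕ) = k) then 1
    else 0

/-- Gram matrix of the standard negative definite root lattice `E₈`. -/
def gramE8 : Matrix (Fin 8) (Fin 8) ℤ := gramRoot 8 2

/-- Gram matrix of the standard negative definite root lattice `E₇`. -/
def gramE7 : Matrix (Fin 7) (Fin 7) ℤ := gramRoot 7 2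

/-- Gram matrix of the standard negative definite root lattice `D₄`. -/
def gramD4 : Matrix (Fin 4) (Fin 4) ℤ := gramRoot 4 1

/-- Gram matrix of the standard negative definite root lattice `D₆`. -/
def gramD6 : Matrix (Fin 6) (Fin 6) ℤ := gramRoot 6 1

/-- Gram matrix of the standard negative definite root lattice `D₁₂`. -/
def gramD12 : Matrix (Fin 12) (Fin 12) ℤ := gramRoot 12 1

/-- Orthogonal (block diagonal) sum of two Gram matrices. -/
def blockSum {m n : ℕ} (A : Matrix (Fin m) (Fin m) ℤ) (B : Matrix (Fin n) (Fin n) ℤ) :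
    Matrix (Fin (m + n)) (Fin (m + n)) ℤ :=
  Matrix.of fun i j =>
    if hi : (i : ℕ) < m then
      if hj : (j : ℕ) < m then A ⟨i, hi⟩ ⟨j, hj⟩ else 0
    else
      if hj : (j : ℕ) < m then 0
      else B ⟨(i : ℕ) - m, by have := i.isLt; omega⟩ ⟨(j : ℕ) - m, by have := j.isLt; omega⟩

/-- Gram matrix of `T = U ⊕ U ⊕ E₈ ⊕ A₁⁵`. -/
def gramT : Matrix (Fin 17) (Fin 17) ℤ :=
  blockSum gramU (blockSum gramU (blockSum gramE8 (Matrix.diagonal fun _ : Fin 5 => (-2 : ℤ))))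

/-- Gram matrix of `U ⊕ U ⊕ E₇ ⊕ D₄ ⊕ A₁ ⊕ A₁`. -/
def gramT₁ : Matrix (Fin 17) (Fin 17) ℤ :=
  blockSum gramU (blockSum gramU (blockSum gramE7 (blockSum gramD4
    (Matrix.diagonal fun _ : Fin 2 => (-2 : ℤ)))))

/-- Gram matrix of `U ⊕ U ⊕ D₆ ⊕ D₆ ⊕ A₁`. -/
def gramT₂ : Matrix (Fin 17) (Fin 17) ℤ :=
  blockSum gramU (blockSum gramU (blockSum gramD6 (blockSum gramD6 gramA1)))

/-!
Both isometries are composites of 2-neighbour steps, and a 2-neighbour step becomes an isometry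
once a hyperbolic plane is added: if `k ∈ K` has `k² ≡ 0 (mod 8)` and `k · K ⊄ 2ℤ`, then in
`U ⊕ K = ℤu ⊕ ℤw ⊕ K` the vector `e = 2w + k - (k²/4)u` is isotropic with `e · (U ⊕ K) = ℤ`, so it
has an isotropic partner `f` with `e · f = 1`, and `⟨e, f⟩^⊥ ≅ K_k + ℤ(k/2)` where
`K_k = {y ∈ K | y · k even}`. Two such steps give `U ⊕ E₈ ⊕ A₁³ ≅ U ⊕ E₇ ⊕ D₄` and
`U ⊕ E₇ ⊕ D₄ ⊕ A₁ ≅ U ⊕ D₆²`, whence `T ≅ U ⊕ U ⊕ E₇ ⊕ D₄ ⊕ A₁² ≅ U ⊕ U ⊕ D₆² ⊕ A₁`.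
-/

def Isometric {R ι : Type*} [CommRing R] [Fintype ι] [DecidableEq ι] (G₁ G₂ : Matrix ι ι R) :
    Prop :=
  ∃ P : Matrix ι ι R, IsUnit P.det ∧ Pᵀ * G₁ * P = G₂

namespace Isometric

variable {R ι : Type*} [CommRing R] [Fintype ι] [DecidableEq ι] {G₁ G₂ G₃ : Matrix ι ι R}

theorem refl (G : Matrix ι ι R) : Isometric G G :=
  ⟨1, by simp, by simp⟩

theorem trans (h₁₂ : Isometric G₁ G₂) (h₂₃ : Isometric G₂ G₃) : Isometric G₁ G₃ := by
  obtain ⟨P, hP, rfl⟩ := h₁₂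
  obtain ⟨Q, hQ, rfl⟩ := h₂₃
  refine ⟨P * Q, ?_, ?_⟩
  · rw [det_mul]
    exact hP.mul hQ
  · simp only [transpose_mul, Matrix.mul_assoc]

theorem of_mul_eq_one {P P' : Matrix ι ι R} (hP : P * P' = 1) (h : Pᵀ * G₁ * P = G₂) :
    Isometric G₁ G₂ :=
  ⟨P, isUnit_det_of_right_inverse hP, h⟩

end Isometric

section blockSum

variable {a b c : ℕ}

theorem blockSum_eq_submatrix_fromBlocks (A : Matrix (Fin a) (Fin a) ℤ)
    (B : Matrix (Fin b) (Fin b) ℤ) :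
    blockSum A B = (fromBlocks A 0 0 B).submatrix finSumFinEquiv.symm finSumFinEquiv.symm := by
  ext i j
  induction i using Fin.addCases <;> induction j using Fin.addCases <;> simp [blockSum]

theorem transpose_blockSum (A : Matrix (Fin a) (Fin a) ℤ) (B : Matrix (Fin b) (Fin b) ℤ) :
    (blockSum A B)ᵀ = blockSum Aᵀ Bᵀ := by
  simp [blockSum_eq_submatrix_fromBlocks, transpose_submatrix, fromBlocks_transpose]

theorem blockSum_mul_blockSum (A A' : Matrix (Fin a) (Fin a) ℤ)
    (B B' : Matrix (Fin b) (Fin b) ℤ) :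
    blockSum A B * blockSum A' B' = blockSum (A * A') (B * B') := by
  simp [blockSum_eq_submatrix_fromBlocks, submatrix_mul_equiv, fromBlocks_multiply]

theorem det_blockSum (A : Matrix (Fin a) (Fin a) ℤ) (B : Matrix (Fin b) (Fin b) ℤ) :
    (blockSum A B).det = A.det * B.det := by
  rw [blockSum_eq_submatrix_fromBlocks, det_submatrix_equiv_self, det_fromBlocks_zero₂₁]

theorem blockSum_diagonal (d : ℤ) :
    blockSum (diagonal fun _ : Fin a => d) (diagonal fun _ : Fin b => d) = diagonal fun _ => d := by
  rw [blockSum_eq_submatrix_fromBlocks, fromBlocks_diagonal, submatrix_diagonal_equiv]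
  simp

theorem blockSum_assoc (A : Matrix (Fin a) (Fin a) ℤ) (B : Matrix (Fin b) (Fin b) ℤ)
    (C : Matrix (Fin c) (Fin c) ℤ) :
    blockSum (blockSum A B) C = (blockSum A (blockSum B C)).submatrix
      (Fin.cast (add_assoc a b c)) (Fin.cast (add_assoc a b c)) := by
  ext i j
  simp only [blockSum, of_apply, submatrix_apply, Fin.val_cast]
  split_ifs <;> first | omega | simp only [Nat.sub_sub]

theorem Isometric.blockSum {G₁ G₂ : Matrix (Fin a) (Fin a) ℤ} {H₁ H₂ : Matrix (Fin b) (Fin b) ℤ}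
    (hG : Isometric G₁ G₂) (hH : Isometric H₁ H₂) :
    Isometric (blockSum G₁ H₁) (blockSum G₂ H₂) := by
  obtain ⟨P, hP, rfl⟩ := hG
  obtain ⟨Q, hQ, rfl⟩ := hH
  refine ⟨_root_.blockSum P Q, ?_, ?_⟩
  · rw [det_blockSum]
    exact hP.mul hQ
  · rw [transpose_blockSum, blockSum_mul_blockSum, blockSum_mul_blockSum]

end blockSum

theorem gramA1_eq_diagonal : gramA1 = diagonal fun _ => -2 := by
  ext i j
  fin_cases i; fin_cases j; rfl

-- The closing `rfl`s hold because `Fin.cast` between equal numerals is definitionally `id`.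
theorem gramT_eq_blockSum : gramT = blockSum gramU (blockSum
    (blockSum gramU (blockSum gramE8 (diagonal fun _ : Fin 3 => (-2 : ℤ))))
    (diagonal fun _ : Fin 2 => (-2 : ℤ))) := by
  rw [blockSum_assoc, blockSum_assoc, blockSum_diagonal]
  rfl

theorem gramT₁_eq_blockSum_diagonal : gramT₁ = blockSum gramU (blockSum
    (blockSum gramU (blockSum gramE7 gramD4)) (diagonal fun _ : Fin 2 => (-2 : ℤ))) := by
  rw [blockSum_assoc, blockSum_assoc]
  rfl

theorem gramT₁_eq_blockSum_gramA1 : gramT₁ = blockSum gramU (blockSum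
    (blockSum gramU (blockSum gramE7 (blockSum gramD4 gramA1))) gramA1) := by
  rw [blockSum_assoc, blockSum_assoc, blockSum_assoc, gramA1_eq_diagonal, blockSum_diagonal]
  rfl

theorem gramT₂_eq_blockSum :
    gramT₂ = blockSum gramU (blockSum (blockSum gramU (blockSum gramD6 gramD6)) gramA1) := by
  rw [blockSum_assoc, blockSum_assoc]
  rfl

/- Columns: `e`, `f` and the images of the simple roots of `E₇ ⊕ D₄`, for `k = θ + a₁ + a₂ + a₃`
with `θ` the highest root of `E₈`; then `K_k = E₇ ⊕ A₁ ⊕ A₁³` and `k/2` glues `A₁⁴` into `D₄`. -/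
def basisE7D4 : Matrix (Fin 13) (Fin 13) ℤ :=
  !![2, 3, 0, 0, 0, 0, 0, -2, 0, 1, 0, 1, 1;
    2, 2, 0, 0, 0, 0, 0, -2, 0, 0, 1, 0, 0;
    2, 2, 1, 0, 0, 0, 0, -2, 0, 0, 2, 0, 0;
    4, 4, 0, 1, 0, 0, 0, -4, 0, 0, 4, 0, 0;
    6, 6, 0, 0, 1, 0, 0, -6, 0, 0, 6, 0, 0;
    5, 5, 0, 0, 0, 1, 0, -5, 0, 0, 5, 0, 0;
    4, 4, 0, 0, 0, 0, 1, -4, 0, 0, 4, 0, 0;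
    3, 3, 0, 0, 0, 0, 0, -2, 0, 0, 3, 0, 0;
    2, 3, 0, 0, 0, 0, 0, -2, 0, 0, 2, 0, 0;
    3, 3, 0, 0, 0, 0, 0, -3, 1, 0, 3, 0, 0;
    1, 1, 0, 0, 0, 0, 0, -1, 0, 1, 0, 0, 0;
    1, 1, 0, 0, 0, 0, 0, -1, 0, 0, 0, 1, 0;
    1, 1, 0, 0, 0, 0, 0, -1, 0, 0, 0, 0, 1]

def basisE7D4Inv : Matrix (Fin 13) (Fin 13) ℤ :=
  !![2, 3, 0, 0, 0, 0, 0, 1, -3, 0, -2, -2, -2;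
    2, 2, 0, 0, 0, 0, 0, 0, -1, 0, -2, -2, -2;
    2, 2, 1, 0, 0, 0, 0, 0, -2, 0, -2, -2, -2;
    4, 4, 0, 1, 0, 0, 0, 0, -4, 0, -4, -4, -4;
    6, 6, 0, 0, 1, 0, 0, 0, -6, 0, -6, -6, -6;
    5, 5, 0, 0, 0, 1, 0, 0, -5, 0, -5, -5, -5;
    4, 4, 0, 0, 0, 0, 1, 0, -4, 0, -4, -4, -4;
    3, 3, 0, 0, 0, 0, 0, 1, -3, 0, -3, -3, -3;
    3, 3, 0, 0, 0, 0, 0, 0, -3, 1, -3, -3, -3;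
    -1, -2, 0, 0, 0, 0, 0, 0, 1, 0, 2, 1, 1;
    -2, -3, 0, 0, 0, 0, 0, 0, 2, 0, 2, 2, 2;
    -1, -2, 0, 0, 0, 0, 0, 0, 1, 0, 1, 2, 1;
    -1, -2, 0, 0, 0, 0, 0, 0, 1, 0, 1, 1, 2]

/- Columns: `e`, `f` and the images of the simple roots of `D₆ ⊕ D₆`, for `k = θ + b + β₃ - β₂`
with `θ` the highest root of `E₇`, `b` the root of `A₁` and `β₂, β₃` two leaves of `D₄`; then
`K_k = D₆ ⊕ A₁ ⊕ D₄ ⊕ A₁` and `k/2` glues `A₁ ⊕ D₄ ⊕ A₁` into `D₆`. -/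
def basisD6D6 : Matrix (Fin 14) (Fin 14) ℤ :=
  !![2, 3, -2, 0, 0, 0, 0, 0, 3, -1, -1, 0, 0, 1;
    2, 2, -2, 0, 0, 0, 0, 0, 2, -1, 0, 0, 0, 0;
    2, 3, -2, 0, 0, 0, 0, 0, 4, -2, 0, 0, 0, 0;
    3, 3, -2, 0, 0, 0, 0, 0, 6, -3, 0, 0, 0, 0;
    4, 4, -4, 1, 0, 0, 0, 0, 8, -4, 0, 0, 0, 0;
    3, 3, -3, 0, 1, 0, 0, 0, 6, -3, 0, 0, 0, 0;
    2, 2, -2, 0, 0, 1, 0, 0, 4, -2, 0, 0, 0, 0;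
    1, 1, -1, 0, 0, 0, 1, 0, 2, -1, 0, 0, 0, 0;
    2, 2, -2, 0, 0, 0, 0, 1, 4, -2, 0, 0, 0, 0;
    0, 0, 0, 0, 0, 0, 0, 0, 0, 0, 0, 0, 1, 0;
    0, 0, 0, 0, 0, 0, 0, 0, 0, 0, 0, 1, 0, 0;
    -1, -1, 1, 0, 0, 0, 0, 0, -1, 0, 1, 0, 0, 0;
    1, 1, -1, 0, 0, 0, 0, 0, 1, 0, 0, 0, 0, 0;
    1, 1, -1, 0, 0, 0, 0, 0, 1, -1, 0, 0, 0, 1]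

def basisD6D6Inv : Matrix (Fin 14) (Fin 14) ℤ :=
  !![2, 3, -3, 1, 0, 0, 0, 0, 0, 0, 0, 2, -2, -2;
    2, 2, -1, 0, 0, 0, 0, 0, 0, 0, 0, 2, -2, -2;
    3, 3, -3, 1, 0, 0, 0, 0, 0, 0, 0, 3, -3, -3;
    4, 4, -4, 0, 1, 0, 0, 0, 0, 0, 0, 4, -4, -4;
    3, 3, -3, 0, 0, 1, 0, 0, 0, 0, 0, 3, -3, -3;
    2, 2, -2, 0, 0, 0, 1, 0, 0, 0, 0, 2, -2, -2;
    1, 1, -1, 0, 0, 0, 0, 1, 0, 0, 0, 1, -1, -1;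
    2, 2, -2, 0, 0, 0, 0, 0, 1, 0, 0, 2, -2, -2;
    -1, -2, 1, 0, 0, 0, 0, 0, 0, 0, 0, -1, 2, 1;
    0, -1, 0, 0, 0, 0, 0, 0, 0, 0, 0, 0, 2, 0;
    0, 0, 0, 0, 0, 0, 0, 0, 0, 0, 0, 1, 1, 0;
    0, 0, 0, 0, 0, 0, 0, 0, 0, 0, 1, 0, 0, 0;
    0, 0, 0, 0, 0, 0, 0, 0, 0, 1, 0, 0, 0, 0;
    0, -1, 0, 0, 0, 0, 0, 0, 0, 0, 0, 0, 1, 1]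

theorem isometric_U_E8_A1_three_U_E7_D4 :
    Isometric (ι := Fin 13)
      (blockSum gramU (blockSum gramE8 (diagonal fun _ : Fin 3 => (-2 : ℤ))))
      (blockSum gramU (blockSum gramE7 gramD4)) :=
  .of_mul_eq_one (P := basisE7D4) (P' := basisE7D4Inv) (by decide) (by decide)

theorem isometric_U_E7_D4_A1_U_D6_D6 :
    Isometric (ι := Fin 14) (blockSum gramU (blockSum gramE7 (blockSum gramD4 gramA1)))
      (blockSum gramU (blockSum gramD6 gramD6)) :=
  .of_mul_eq_one (P := basisD6D6) (P' := basisD6D6Inv) (by decide) (by decide)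

/-- `T = U ⊕ U ⊕ E₈ ⊕ A₁⁵` is isometric to `U ⊕ U ⊕ E₇ ⊕ D₄ ⊕ A₁²` and to
`U ⊕ U ⊕ D₆² ⊕ A₁`. -/
theorem T_isometric_to_U_U_E7_D4_A1sq_and_U_U_D6sq_A1 :
    (∃ P : Matrix (Fin 17) (Fin 17) ℤ, IsUnit P.det ∧ Pᵀ * gramT * P = gramT₁) ∧
    (∃ Q : Matrix (Fin 17) (Fin 17) ℤ, IsUnit Q.det ∧ Qᵀ * gramT * Q = gramT₂) := by
  have h₁ : Isometric gramT gramT₁ := by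
    rw [gramT_eq_blockSum, gramT₁_eq_blockSum_diagonal]
    exact (Isometric.refl _).blockSum (isometric_U_E8_A1_three_U_E7_D4.blockSum (.refl _))
  have h₂ : Isometric gramT₁ gramT₂ := by
    rw [gramT₁_eq_blockSum_gramA1, gramT₂_eq_blockSum]
    exact (Isometric.refl _).blockSum (isometric_U_E7_D4_A1_U_D6_D6.blockSum (.refl _))
  exact ⟨h₁, h₁.trans h₂⟩
end
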